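/- arXiv:1404.2325 — 6 statements merged into one kernel-verified Lean document; each statement's English description precedes it below -/
import Mathlib

section
/- Let n ∈ ℕ, let D ⊆ ℝⁿ be a compact set, let Φ : ℝⁿ → ℝⁿ be continuous, and let V : ℝⁿ → ℝ be continuously differentiable such that V(x) ≥ 0 for all x ∈ D and ⟨∇V(x), Φ(x)⟩ < 0 for every x ∈ D with V(x) > 0. Then for every differentiable trajectory x : [0,∞) → ℝⁿ satisfying x'(t) = Φ(x(t)) and x(t) ∈ D for all t ≥ 0, the value V(x(t)) tends to 0 as t → ∞. -/
open scoped RealInnerProductSpace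

/-! `V ∘ x` is nonnegative, with derivative `⟪∇V, Φ⟫ ∘ x`, which is negative where `V ∘ x > 0`
and vanishes where `V ∘ x` attains its minimum `0`; so `V ∘ x` is antitone. If it stayed above
some `c > 0`, the trajectory would remain in the compact set `D ∩ {V ≥ c}`, on which
`⟪∇V, Φ⟫ ≤ -ε < 0`, and `V ∘ x` would decrease at least linearly, eventually becoming negative. -/

open Filter Topology Set

section

variable {g g' : ℝ → ℝ}

theorem nonpos_of_hasDerivAt_of_nonneg_of_pos_imp_neg
    (hg : ∀ t, 0 ≤ t → HasDerivAt g (g' t) t) (hg0 : ∀ t, 0 ≤ t → 0 ≤ g t)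
    (hneg : ∀ t, 0 ≤ t → 0 < g t → g' t < 0) {t : ℝ} (ht : 0 < t) : g' t ≤ 0 := by
  rcases (hg0 t ht.le).lt_or_eq with hpos | hzero
  · exact (hneg t ht.le hpos).le
  · have hmin : IsLocalMin g t := by
      filter_upwards [lt_mem_nhds ht] with s hs
      rw [← hzero]
      exact hg0 s hs.le
    exact (hmin.hasDerivAt_eq_zero (hg t ht.le)).le

theorem antitoneOn_Ici_of_hasDerivAt_of_nonneg_of_pos_imp_neg
    (hg : ∀ t, 0 ≤ t → HasDerivAt g (g' t) t) (hg0 : ∀ t, 0 ≤ t → 0 ≤ g t)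
    (hneg : ∀ t, 0 ≤ t → 0 < g t → g' t < 0) : AntitoneOn g (Ici 0) := by
  refine antitoneOn_of_hasDerivWithinAt_nonpos (f' := g') (convex_Ici 0)
    (fun t ht => (hg t ht).continuousAt.continuousWithinAt) ?_ ?_ <;> rw [interior_Ici]
  · exact fun t ht => (hg t (le_of_lt ht)).hasDerivWithinAt
  · exact fun t ht => nonpos_of_hasDerivAt_of_nonneg_of_pos_imp_neg hg hg0 hneg ht

theorem exists_lt_of_hasDerivAt_le_neg {ε : ℝ} (hε : 0 < ε)
    (hg : ∀ t, 0 ≤ t → HasDerivAt g (g' t) t) (hg' : ∀ t, 0 ≤ t → g' t ≤ -ε) (a : ℝ) :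
    ∃ t, 0 ≤ t ∧ g t < a := by
  set T := max 0 ((g 0 - a) / ε + 1)
  have hT : 0 ≤ T := le_max_left _ _
  have hdecay : g T - g 0 ≤ -ε * (T - 0) := by
    refine (convex_Ici 0).image_sub_le_mul_sub_of_deriv_le
      (fun t ht => (hg t ht).continuousAt.continuousWithinAt) ?_ ?_ 0 self_mem_Ici T hT hT
      <;> rw [interior_Ici]
    · exact fun t ht => (hg t (le_of_lt ht)).differentiableAt.differentiableWithinAt
    · exact fun t ht => (hg t (le_of_lt ht)).deriv ▸ hg' t (le_of_lt ht)
  have hεT : g 0 - a + ε ≤ ε * T := calc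
    g 0 - a + ε = ε * ((g 0 - a) / ε + 1) := by field_simp
    _ ≤ ε * T := mul_le_mul_of_nonneg_left (le_max_right _ _) hε.le
  exact ⟨T, hT, by linarith⟩

theorem tendsto_zero_of_hasDerivAt_of_nonneg_of_le_neg
    (hg : ∀ t, 0 ≤ t → HasDerivAt g (g' t) t) (hg0 : ∀ t, 0 ≤ t → 0 ≤ g t)
    (hdec : ∀ c > 0, ∃ ε > 0, ∀ t, 0 ≤ t → c ≤ g t → g' t ≤ -ε) :
    Tendsto g atTop (𝓝 0) := by
  have hneg : ∀ t, 0 ≤ t → 0 < g t → g' t < 0 := fun t ht hpos => by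
    obtain ⟨ε, hε, hle⟩ := hdec (g t) hpos
    linarith [hle t ht le_rfl]
  have hanti := antitoneOn_Ici_of_hasDerivAt_of_nonneg_of_pos_imp_neg hg hg0 hneg
  refine tendsto_order.2 ⟨fun a ha => ?_, fun c hc => ?_⟩
  · filter_upwards [eventually_ge_atTop 0] with t ht
    exact ha.trans_le (hg0 t ht)
  · obtain ⟨t₀, ht₀, hlt⟩ : ∃ t, 0 ≤ t ∧ g t < c := by
      by_contra! hge
      obtain ⟨ε, hε, hle⟩ := hdec c hc
      obtain ⟨t, ht, hlt⟩ :=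
        exists_lt_of_hasDerivAt_le_neg hε hg (fun t ht => hle t ht (hge t ht)) 0
      exact (hg0 t ht).not_gt hlt
    filter_upwards [eventually_ge_atTop t₀] with t ht
    exact (hanti ht₀ (ht₀.trans ht) ht).trans_lt hlt

end

theorem IsCompact.exists_forall_le_neg_of_pos_imp_neg {X : Type*} [TopologicalSpace X]
    {D : Set X} (hD : IsCompact D) {V f : X → ℝ} (hV : Continuous V) (hf : ContinuousOn f D)
    (hneg : ∀ y ∈ D, 0 < V y → f y < 0) {c : ℝ} (hc : 0 < c) :
    ∃ ε > 0, ∀ y ∈ D, c ≤ V y → f y ≤ -ε := by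
  have hK : IsCompact (D ∩ V ⁻¹' Ici c) := hD.inter_right (isClosed_Ici.preimage hV)
  obtain ⟨ε, hε, hle⟩ := hK.exists_forall_le' (hf.mono inter_subset_left).neg (a := 0)
    fun y hy => neg_pos.2 (hneg y hy.1 (hc.trans_le hy.2))
  exact ⟨ε, hε, fun y hy hcy => le_neg.2 (hle y ⟨hy, hcy⟩)⟩

/-- Lyapunov stability theorem (single choice set): if `V` is a continuously
differentiable nonnegative function on the compact invariant set `D` whose
gradient has negative inner product with the vector field `Φ` wherever `V > 0`,
then along any trajectory of `Φ` staying in `D`, the value of `V` tends to `0`. -/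
theorem stmt0 (n : ℕ) (D : Set (EuclideanSpace ℝ (Fin n))) (hD : IsCompact D)
    (Φ : EuclideanSpace ℝ (Fin n) → EuclideanSpace ℝ (Fin n)) (hΦ : Continuous Φ)
    (V : EuclideanSpace ℝ (Fin n) → ℝ) (hV : ContDiff ℝ 1 V)
    (hVnonneg : ∀ x ∈ D, 0 ≤ V x)
    (hdesc : ∀ x ∈ D, 0 < V x → ⟪gradient V x, Φ x⟫ < 0)
    (x : ℝ → EuclideanSpace ℝ (Fin n))
    (hx : ∀ t : ℝ, 0 ≤ t → HasDerivAt x (Φ (x t)) t)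
    (hxD : ∀ t : ℝ, 0 ≤ t → x t ∈ D) :
    Filter.Tendsto (fun t => V (x t)) Filter.atTop (nhds 0) := by
  have hVΦ : Continuous fun y => fderiv ℝ V y (Φ y) :=
    (hV.continuous_fderiv one_ne_zero).clm_apply hΦ
  have hdesc' : ∀ y ∈ D, 0 < V y → fderiv ℝ V y (Φ y) < 0 := fun y hy hpos => by
    simpa only [inner_gradient_left] using hdesc y hy hpos
  have hderiv : ∀ t, 0 ≤ t → HasDerivAt (fun t => V (x t)) (fderiv ℝ V (x t) (Φ (x t))) t :=
    fun t ht => ((hV.differentiable one_ne_zero) (x t)).hasFDerivAt.comp_hasDerivAt t (hx t ht)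
  refine tendsto_zero_of_hasDerivAt_of_nonneg_of_le_neg hderiv
    (fun t ht => hVnonneg _ (hxD t ht)) fun c hc => ?_
  obtain ⟨ε, hε, hle⟩ :=
    hD.exists_forall_le_neg_of_pos_imp_neg hV.continuous hVΦ.continuousOn hdesc' hc
  exact ⟨ε, hε, fun t ht hct => hle _ (hxD t ht) hct⟩
end

section
/- Let C be a finite set, let X : C → ℝ with X_j ≥ 0 for all j ∈ C, and let p : C → ℝ. Define W_j = Σ_{k ∈ C} ((p_j − p_k)₊)². Then Σ_{j ∈ C} W_j · Φ_j(X,p) ≤ 0, and the inequality is strict whenever X is not a Wardrop equilibrium for prices p (i.e., whenever there exist j, k ∈ C with X_j > 0 and p_j > p_k). -/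
/-!
Pairing `Φ` with any weight `W` and exchanging the summation indices in the inflow term gives
`Σ_j W_j Φ_j = Σ_{j,k} X_j (p_j - p_k)₊ (W_k - W_j)`: each unit of traffic moving from `j` to a
cheaper slot `k` contributes `W_k - W_j`. For `W_j = Σ_k ((p_j - p_k)₊)²`, which is strictly
increasing in the price `p_j`, every such contribution is `≤ 0`, and it is `< 0` as soon as
`X_j > 0` and `p_k < p_j`.
-/

/-- The adjustment dynamics vector field:
`Φ_j(X,p) = Σ_k [X_k (p_k - p_j)₊ - X_j (p_j - p_k)₊]`. -/
def Phi {ι : Type*} [Fintype ι] (X p : ι → ℝ) (j : ι) : ℝ :=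
  ∑ k, (X k * max (p k - p j) 0 - X j * max (p j - p k) 0)

open Finset

section

variable {ι : Type*}

theorem transfer_term_nonpos {X p W : ι → ℝ} (hX : ∀ j, 0 ≤ X j)
    (hW : ∀ j k, p k < p j → W k ≤ W j) (j k : ι) :
    X j * max (p j - p k) 0 * (W k - W j) ≤ 0 := by
  rcases le_or_gt (p j) (p k) with hle | hlt
  · simp [max_eq_right (sub_nonpos.mpr hle)]
  · exact mul_nonpos_of_nonneg_of_nonpos (mul_nonneg (hX j) (le_max_right _ _))
      (sub_nonpos.mpr (hW j k hlt))

theorem transfer_term_neg {X p W : ι → ℝ} {j k : ι} (hXj : 0 < X j) (hp : p k < p j)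
    (hW : W k < W j) : X j * max (p j - p k) 0 * (W k - W j) < 0 :=
  mul_neg_of_pos_of_neg (mul_pos hXj (lt_max_of_lt_left (sub_pos.mpr hp))) (sub_neg.mpr hW)

variable [Fintype ι]

theorem sum_mul_Phi_eq (X p W : ι → ℝ) :
    ∑ j, W j * Phi X p j = ∑ j, ∑ k, X j * max (p j - p k) 0 * (W k - W j) := by
  have inflow_swap : ∑ j, ∑ k, W j * (X k * max (p k - p j) 0)
      = ∑ j, ∑ k, W k * (X j * max (p j - p k) 0) := Finset.sum_comm
  simp only [Phi, mul_sum, mul_sub, sum_sub_distrib]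
  rw [inflow_swap]
  congr 1 <;> exact sum_congr rfl fun _ _ => sum_congr rfl fun _ _ => by ring

theorem sum_mul_Phi_nonpos {X p W : ι → ℝ} (hX : ∀ j, 0 ≤ X j)
    (hW : ∀ j k, p k < p j → W k ≤ W j) : ∑ j, W j * Phi X p j ≤ 0 := by
  rw [sum_mul_Phi_eq]
  exact sum_nonpos fun j _ => sum_nonpos fun k _ => transfer_term_nonpos hX hW j k

theorem sum_mul_Phi_neg {X p W : ι → ℝ} (hX : ∀ j, 0 ≤ X j)
    (hW : ∀ j k, p k < p j → W k < W j) (hflow : ∃ j k, 0 < X j ∧ p k < p j) :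
    ∑ j, W j * Phi X p j < 0 := by
  obtain ⟨j, k, hXj, hp⟩ := hflow
  have hW_le : ∀ j k, p k < p j → W k ≤ W j := fun j k h => (hW j k h).le
  rw [sum_mul_Phi_eq]
  refine sum_neg' (fun i _ => sum_nonpos fun m _ => transfer_term_nonpos hX hW_le i m)
    ⟨j, mem_univ j, ?_⟩
  exact sum_neg' (fun m _ => transfer_term_nonpos hX hW_le j m)
    ⟨k, mem_univ k, transfer_term_neg hXj hp (hW j k hp)⟩

theorem sum_sq_max_sub_lt_of_lt (p : ι → ℝ) {j k : ι} (h : p k < p j) :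
    ∑ m, (max (p k - p m) 0) ^ 2 < ∑ m, (max (p j - p m) 0) ^ 2 := by
  refine sum_lt_sum (fun m _ => ?_) ⟨k, mem_univ k, ?_⟩
  · exact pow_le_pow_left₀ (le_max_right _ _) (max_le_max_right 0 (sub_le_sub_right h.le _)) 2
  · simpa using pow_pos (lt_max_of_lt_left (sub_pos.mpr h)) 2

end

/-- With `W_j = Σ_k ((p_j - p_k)₊)²` (the partial derivative of the Lyapunov
function at constant prices), one has `Σ_j W_j Φ_j(X,p) ≤ 0`, with strict
inequality whenever `X` is not a Wardrop equilibrium. -/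
theorem stmt6 {ι : Type*} [Fintype ι] (X p : ι → ℝ)
    (hX : ∀ j, 0 ≤ X j) :
    (∑ j, (∑ k, (max (p j - p k) 0) ^ 2) * Phi X p j ≤ 0) ∧
    ((∃ j k, 0 < X j ∧ p k < p j) →
      ∑ j, (∑ k, (max (p j - p k) 0) ^ 2) * Phi X p j < 0) :=
  have hW : ∀ j k, p k < p j →
      ∑ m, (max (p k - p m) 0) ^ 2 < ∑ m, (max (p j - p m) 0) ^ 2 :=
    fun _ _ => sum_sq_max_sub_lt_of_lt p
  ⟨sum_mul_Phi_nonpos hX fun j k h => (hW j k h).le, sum_mul_Phi_neg hX hW⟩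
end

section
/- Fix N ≥ 1 and identify the users with {0, 1, …, N}, where user N is a fictitious additional user. Let h be any real-valued function on subsets of {0, …, N−1} with h(∅) = 0 (h(S) represents the marginal contribution of the fictitious user when it arrives immediately after the set S of real users). Define the Shapley gradient G = (1/(N+1)!)·Σ_σ h(P(σ)), where σ ranges over all (N+1)! permutations of {0,…,N} and P(σ) is the set of users strictly preceding user N in σ, and define the per-user gradient φ'_i = (1/N!)·Σ_π h(S(π,i)), where π ranges over all N! permutations of {0,…,N−1} and S(π,i) is the set of users arriving not later than i in π. Then the mean of the per-user gradients satisfies (1/N)·Σ_{i=0}^{N−1} φ'_i = ((N+1)/N)·G; in particular the mean equals G up to an error of order 1/N. -/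
/-!
Removing user `N` from an ordering of `{0, …, N}` leaves an ordering `π` of the real users
together with the slot `p ∈ {0, …, N}` at which `N` arrived, and the predecessors of `N` are the
real users whose `π`-rank is below `p`. For fixed `π`, the slot `p = 0` contributes `h ∅ = 0`,
while the slot `p = k + 1` contributes `h` of the users of rank at most `k`, which is the term
of `φ'_i` for the user `i` of rank `k`. Hence `Σ_σ h(P(σ)) = N! · Σ_i φ'_i`, and
`(N + 1)! = (N + 1) · N!` gives the factor `(N + 1)/N`.
-/

open Equiv Finset

namespace Equiv.Perm

variable {n : ℕ}

def decomposeFinLast : Perm (Fin (n + 1)) ≃ Fin (n + 1) × Perm (Fin n) :=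
  (finSuccEquivLast.permCongr.trans decomposeOption).trans
    (finSuccEquivLast.symm.prodCongr (Equiv.refl _))

@[simp]
theorem decomposeFinLast_symm_apply_last (p : Fin (n + 1)) (e : Perm (Fin n)) :
    decomposeFinLast.symm (p, e) (Fin.last n) = p := by
  simp [decomposeFinLast, permCongr_apply]

theorem decomposeFinLast_symm_apply_castSucc (p : Fin (n + 1)) (e : Perm (Fin n)) (i : Fin n) :
    decomposeFinLast.symm (p, e) i.castSucc = swap (Fin.last n) p (e i).castSucc := by
  simp [decomposeFinLast, permCongr_apply, symm_apply_eq, ← finSuccEquivLast.injective.swap_apply]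

end Equiv.Perm

open Equiv.Perm

section Predecessors

variable {n : ℕ}

/-- `σ i` is read as the arrival slot of user `i`; `Fin.last n` is the fictitious user. -/
def predecessorsOfLast (σ : Perm (Fin (n + 1))) : Finset (Fin n) :=
  univ.filter fun i => σ i.castSucc < σ (Fin.last n)

theorem predecessorsOfLast_decomposeFinLast_symm (p : Fin (n + 1)) (e : Perm (Fin n)) :
    predecessorsOfLast (decomposeFinLast.symm (p, e)) = univ.filter fun i => (e i).castSucc < p := by
  refine filter_congr fun i _ => ?_
  rw [decomposeFinLast_symm_apply_castSucc, decomposeFinLast_symm_apply_last]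
  rcases eq_or_ne (e i).castSucc p with hp | hp
  · simp [hp, Fin.le_last]
  · rw [swap_apply_of_ne_of_ne (Fin.castSucc_ne_last _) hp]

theorem sum_predecessorsOfLast {M : Type*} [AddCommMonoid M] (g : Finset (Fin n) → M)
    (hg : g ∅ = 0) :
    ∑ σ : Perm (Fin (n + 1)), g (predecessorsOfLast σ) =
      ∑ i, ∑ π : Perm (Fin n), g (univ.filter fun j => π j ≤ π i) := by
  rw [← decomposeFinLast.symm.sum_comp (fun σ => g (predecessorsOfLast σ)),
    Fintype.sum_prod_type, Finset.sum_comm, Finset.sum_comm (s := univ (α := Fin n))]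
  refine Fintype.sum_congr _ _ fun π => ?_
  simp only [predecessorsOfLast_decomposeFinLast_symm, Fin.sum_univ_succ, Fin.not_lt_zero,
    filter_false, hg, zero_add, Fin.castSucc_lt_succ_iff]
  exact (Equiv.sum_comp π fun k => g (univ.filter fun j => π j ≤ k)).symm

end Predecessors

theorem stmt11_general (N : ℕ) (h : Finset (Fin N) → ℝ) (h0 : h ∅ = 0)
    (G : ℝ)
    (hG : G = (1 / ((N + 1).factorial : ℝ)) *
      ∑ σ : Equiv.Perm (Fin (N + 1)),
        h (Finset.univ.filter
          (fun i : Fin N => σ i.castSucc < σ (Fin.last N))))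
    (φ' : Fin N → ℝ)
    (hφ : ∀ i, φ' i = (1 / (N.factorial : ℝ)) *
      ∑ π : Equiv.Perm (Fin N),
        h (Finset.univ.filter (fun j => π j ≤ π i))) :
    (1 / N : ℝ) * ∑ i, φ' i = ((N + 1 : ℝ) / N) * G := by
  have hsum := sum_predecessorsOfLast h h0
  simp only [predecessorsOfLast] at hsum
  rw [hG, hsum, Fintype.sum_congr _ _ hφ, ← mul_sum, Nat.factorial_succ, Nat.cast_mul,
    Nat.cast_succ]
  field_simp

/-- Appendix A main result: with `h(S)` the marginal contribution of the
fictitious user `N` when arriving immediately after the set `S` of real users,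
`h(∅) = 0`, the Shapley gradient `G = (1/(N+1)!) Σ_σ h(P(σ))` (over all
permutations of `{0,…,N}`, `P(σ)` the strict predecessors of user `N`) and the
per-user gradients `φ'_i = (1/N!) Σ_π h(S(π,i))` satisfy
`(1/N) Σ_i φ'_i = ((N+1)/N) G`. -/
theorem stmt11 (N : ℕ) (hN : 1 ≤ N) (h : Finset (Fin N) → ℝ) (h0 : h ∅ = 0)
    (G : ℝ)
    (hG : G = (1 / ((N + 1).factorial : ℝ)) *
      ∑ σ : Equiv.Perm (Fin (N + 1)),
        h (Finset.univ.filter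
          (fun i : Fin N => σ i.castSucc < σ (Fin.last N))))
    (φ' : Fin N → ℝ)
    (hφ : ∀ i, φ' i = (1 / (N.factorial : ℝ)) *
      ∑ π : Equiv.Perm (Fin N),
        h (Finset.univ.filter (fun j => π j ≤ π i))) :
    (1 / N : ℝ) * ∑ i, φ' i = ((N + 1 : ℝ) / N) * G :=
  stmt11_general N h h0 G hG φ' hφ
end

section
/- Let n ≥ 1 and 1 ≤ K ≤ n, let f : Fin n → ℝ be injective, let q be the K-th largest of the values f_1, …, f_n, and let j* be the unique index with f_{j*} = q. Then there exists δ > 0 such that for all du with 0 < du < δ: (i) the K-th largest value of the profile obtained from f by replacing f_{j*} with f_{j*} + du equals q + du; and (ii) for every index j ≠ j*, the K-th largest value of the profile obtained from f by replacing f_j with f_j + du equals q. -/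
/-!
By injectivity every value other than `f jstar` differs from `q`, and there are finitely
many of them, so they all lie at distance at least some `δ > 0` from `q`. Shifting a single
value, or the level itself, by less than `δ` changes neither which values lie strictly above
the level nor which lie at or above it, and these two sets are all that `IsKthLargest` sees.
-/

/-- `q` is the `K`-th largest of the values of `g`: fewer than `K` values
strictly exceed `q`, while at least `K` values are at least `q`. -/
def IsKthLargest {n : ℕ} (g : Fin n → ℝ) (K : ℕ) (q : ℝ) : Prop :=
  (Finset.univ.filter (fun k => q < g k)).card < K ∧
  K ≤ (Finset.univ.filter (fun k => q ≤ g k)).card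

theorem isKthLargest_congr {n K : ℕ} {g g' : Fin n → ℝ} {q q' : ℝ}
    (hlt : ∀ k, q < g k ↔ q' < g' k) (hle : ∀ k, q ≤ g k ↔ q' ≤ g' k) :
    IsKthLargest g K q ↔ IsKthLargest g' K q' := by
  simp only [IsKthLargest, hlt, hle]

theorem exists_pos_forall_le_abs_sub {ι : Type*} [Finite ι] (g : ι → ℝ) (q : ℝ) :
    ∃ δ > 0, ∀ k, g k ≠ q → δ ≤ |g k - q| := by
  have hopen : IsOpen (Set.range g \ {q})ᶜ :=
    ((Set.finite_range g).sdiff.isClosed).isOpen_compl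
  obtain ⟨δ, hδ, hball⟩ := Metric.isOpen_iff.mp hopen q (by simp)
  refine ⟨δ, hδ, fun k hk => ?_⟩
  by_contra! hlt
  exact hball (by simpa [Real.dist_eq] using hlt) ⟨⟨k, rfl⟩, hk⟩

section ShiftBelowGap

variable {a q d : ℝ}

theorem add_lt_iff_and_add_le_iff_of_lt_abs_sub (hd : 0 ≤ d) (h : d < |a - q|) :
    (q + d < a ↔ q < a) ∧ (q + d ≤ a ↔ q ≤ a) := by
  rcases lt_abs.mp h with h | h <;> constructor <;> constructor <;> intro <;> linarith

theorem lt_add_iff_and_le_add_iff_of_lt_abs_sub (hd : 0 ≤ d) (h : d < |a - q|) :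
    (q < a + d ↔ q < a) ∧ (q ≤ a + d ↔ q ≤ a) := by
  rcases lt_abs.mp h with h | h <;> constructor <;> constructor <;> intro <;> linarith

end ShiftBelowGap

theorem stmt13_general (n K : ℕ)
    (f : Fin n → ℝ) (hf : Function.Injective f) (q : ℝ)
    (jstar : Fin n) (hjstar : f jstar = q)
    (hq : IsKthLargest f K q) :
    ∃ δ > 0, ∀ du : ℝ, 0 < du → du < δ →
      IsKthLargest (Function.update f jstar (f jstar + du)) K (q + du) ∧
      ∀ j, j ≠ jstar →
        IsKthLargest (Function.update f j (f j + du)) K q := by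
  obtain ⟨δ, hδ, hgap⟩ := exists_pos_forall_le_abs_sub f q
  refine ⟨δ, hδ, fun du hdu hduδ => ?_⟩
  have hsep : ∀ k ≠ jstar, du < |f k - q| := fun k hk =>
    hduδ.trans_le (hgap k (hjstar ▸ hf.ne hk))
  refine ⟨?_, fun j hj => ?_⟩
  · refine (isKthLargest_congr (fun k => ?_) (fun k => ?_)).1 hq <;>
      rcases eq_or_ne k jstar with rfl | hk
    · simp [hjstar]
    · simpa [hk] using (add_lt_iff_and_add_le_iff_of_lt_abs_sub hdu.le (hsep k hk)).1.symm
    · simp [hjstar]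
    · simpa [hk] using (add_lt_iff_and_add_le_iff_of_lt_abs_sub hdu.le (hsep k hk)).2.symm
  · have hshift := lt_add_iff_and_le_add_iff_of_lt_abs_sub hdu.le (hsep j hj)
    refine (isKthLargest_congr (fun k => ?_) (fun k => ?_)).1 hq <;>
      rcases eq_or_ne k j with rfl | hk
    · simpa using hshift.1.symm
    · simp [hk]
    · simpa using hshift.2.symm
    · simp [hk]

/-- Adding a small amount `du` of traffic to the slot currently at the `K`-th
largest level raises the `K`-th largest value by `du`, while adding it to any
other slot leaves the `K`-th largest value unchanged. -/
theorem stmt13 (n K : ℕ) (hn : 1 ≤ n) (hK1 : 1 ≤ K) (hKn : K ≤ n)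
    (f : Fin n → ℝ) (hf : Function.Injective f) (q : ℝ)
    (jstar : Fin n) (hjstar : f jstar = q)
    (hq : IsKthLargest f K q) :
    ∃ δ > 0, ∀ du : ℝ, 0 < du → du < δ →
      IsKthLargest (Function.update f jstar (f jstar + du)) K (q + du) ∧
      ∀ j, j ≠ jstar →
        IsKthLargest (Function.update f j (f j + du)) K q :=
  stmt13_general n K f hf q jstar hjstar hq
end

section
/- Let n ≥ 1, let t : Fin n → ℝ, and let q ∈ ℝ be such that the set M = {k : t_k ≥ q} is nonempty. For σ > 0 define A_σ(j) = 1 if t_j > q, and A_σ(j) = exp(−(t_j − q)²/σ²) if t_j ≤ q. Then for every index j, the ratio A_σ(j)/Σ_{k} A_σ(k) tends, as σ → 0⁺, to 𝟙[t_j ≥ q] / |M|, i.e., to 1/|M| if t_j ≥ q and to 0 if t_j < q. -/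
/-!
Each weight converges to the indicator `𝟙[q ≤ t_j]`: it is constantly `1` above `q`, the Gaussian
factor is exactly `exp 0 = 1` at `t_j = q`, and below `q` it is `exp (-c / σ²)` with `c > 0`, which
vanishes as `σ → 0⁺`. Hence the denominator tends to `|M| ≠ 0` and the ratio tends to the ratio
of the limits.
-/

open Filter Topology Real

theorem tendsto_exp_neg_div_sq_nhdsGT_zero {c : ℝ} (hc : 0 < c) :
    Tendsto (fun σ : ℝ => exp (-c / σ ^ 2)) (𝓝[>] 0) (𝓝 0) := by
  have h : Tendsto (fun σ : ℝ => -c * (σ⁻¹) ^ 2) (𝓝[>] 0) atBot :=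
    ((tendsto_pow_atTop two_ne_zero).comp tendsto_inv_nhdsGT_zero).const_mul_atTop_of_neg
      (neg_neg_of_pos hc)
  exact tendsto_exp_atBot.comp (h.congr fun σ => by simp [div_eq_mul_inv, inv_pow])

noncomputable def smoothedWeight (q σ x : ℝ) : ℝ :=
  if q < x then 1 else exp (-(x - q) ^ 2 / σ ^ 2)

theorem tendsto_smoothedWeight_nhdsGT_zero (q x : ℝ) :
    Tendsto (fun σ => smoothedWeight q σ x) (𝓝[>] 0) (𝓝 (if q ≤ x then 1 else 0)) := by
  rcases lt_trichotomy x q with hxq | rfl | hqx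
  · simp only [smoothedWeight, if_neg hxq.not_gt, if_neg hxq.not_ge]
    exact tendsto_exp_neg_div_sq_nhdsGT_zero (sq_pos_of_neg (sub_neg.2 hxq))
  · simp [smoothedWeight]
  · simp [smoothedWeight, hqx, hqx.le]

theorem tendsto_div_sum_of_tendsto {α ι 𝕜 : Type*} [Fintype ι] [Field 𝕜] [TopologicalSpace 𝕜]
    [IsTopologicalDivisionRing 𝕜] {l : Filter α} {w : α → ι → 𝕜} {c : ι → 𝕜}
    (h : ∀ k, Tendsto (fun a => w a k) l (𝓝 (c k))) (hc : ∑ k, c k ≠ 0) (j : ι) :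
    Tendsto (fun a => w a j / ∑ k, w a k) l (𝓝 (c j / ∑ k, c k)) :=
  (h j).div (tendsto_finsetSum _ fun k _ => h k) hc

theorem stmt14_general (n : ℕ) (t : Fin n → ℝ) (q : ℝ)
    (hM : (Finset.univ.filter (fun k => q ≤ t k)).Nonempty)
    (A : ℝ → Fin n → ℝ)
    (hA : ∀ σ j, A σ j =
      if q < t j then 1 else Real.exp (-(t j - q) ^ 2 / σ ^ 2)) :
    ∀ j, Filter.Tendsto (fun σ => A σ j / ∑ k, A σ k)
      (nhdsWithin 0 (Set.Ioi 0))
      (nhds (if q ≤ t j then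
        1 / ((Finset.univ.filter (fun k => q ≤ t k)).card : ℝ) else 0)) := by
  intro j
  obtain rfl : A = fun σ k => smoothedWeight q σ (t k) := funext fun σ => funext (hA σ)
  have hcard : ∑ k, (if q ≤ t k then (1 : ℝ) else 0) =
      (Finset.univ.filter (fun k => q ≤ t k)).card := by
    simp [Finset.sum_boole]
  have hlim := tendsto_div_sum_of_tendsto (fun k => tendsto_smoothedWeight_nhdsGT_zero q (t k))
    (hcard ▸ Nat.cast_ne_zero.2 hM.card_pos.ne') j
  rw [hcard] at hlim
  convert hlim using 2
  split_ifs <;> simp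

/-- As `σ → 0⁺`, the smoothed weight ratio `A_σ(j) / Σ_k A_σ(k)`, with
`A_σ(j) = 1` if `t_j > q` and `A_σ(j) = exp(-(t_j - q)²/σ²)` otherwise,
converges to the normalised indicator `𝟙[t_j ≥ q] / |{k : t_k ≥ q}|`. -/
theorem stmt14 (n : ℕ) (hn : 1 ≤ n) (t : Fin n → ℝ) (q : ℝ)
    (hM : (Finset.univ.filter (fun k => q ≤ t k)).Nonempty)
    (A : ℝ → Fin n → ℝ)
    (hA : ∀ σ j, A σ j =
      if q < t j then 1 else Real.exp (-(t j - q) ^ 2 / σ ^ 2)) :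
    ∀ j, Filter.Tendsto (fun σ => A σ j / ∑ k, A σ k)
      (nhdsWithin 0 (Set.Ioi 0))
      (nhds (if q ≤ t j then
        1 / ((Finset.univ.filter (fun k => q ≤ t k)).card : ℝ) else 0)) :=
  stmt14_general n t q hM A hA
end

section
/- Let C be a finite set, let q : (C → ℝ) → (C → ℝ) be any function assigning slot prices to traffic assignments, and let X : ℝ → (C → ℝ) be differentiable with X_j'(t) = Φ_j(X(t), q(X(t))) for all j ∈ C and all t. Then the total flow Σ_{j ∈ C} X_j(t) is constant in t; in particular, if the initial assignment is demand feasible with demand d (i.e., Σ_{j ∈ C} X_j(0) = d), then Σ_{j ∈ C} X_j(t) = d for all t. -/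
/- Swapping the two summation indices turns the total inflow `Σ_j Σ_k X_k (p_k - p_j)₊` into the
total outflow `Σ_j Σ_k X_j (p_j - p_k)₊`. -/
theorem sum_Phi_eq_zero {ι : Type*} [Fintype ι] (X p : ι → ℝ) : ∑ j, Phi X p j = 0 := by
  simp only [Phi, Finset.sum_sub_distrib]
  rw [Finset.sum_comm (f := fun j k => X k * max (p k - p j) 0), sub_self]

theorem sum_apply_eq_of_hasDerivAt_of_sum_eq_zero {ι : Type*} [Fintype ι]
    {X v : ℝ → ι → ℝ} (hX : ∀ j t, HasDerivAt (fun s => X s j) (v t j) t)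
    (hv : ∀ t, ∑ j, v t j = 0) (t₁ t₂ : ℝ) : ∑ j, X t₁ j = ∑ j, X t₂ j := by
  have hderiv : ∀ t, HasDerivAt (fun s => ∑ j, X s j) 0 t := fun t => by
    simpa only [hv t] using HasDerivAt.fun_sum (u := Finset.univ) fun j _ => hX j t
  exact is_const_of_deriv_eq_zero (fun t => (hderiv t).differentiableAt)
    (fun t => (hderiv t).deriv) t₁ t₂

/-- Along any trajectory of the adjustment dynamics (with prices depending
arbitrarily on the current assignment) the total flow is constant; in
particular demand feasibility is preserved. -/
theorem stmt16 {ι : Type*} [Fintype ι]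
    (q : (ι → ℝ) → (ι → ℝ)) (X : ℝ → ι → ℝ) (d : ℝ)
    (hX : ∀ (j : ι) (t : ℝ),
      HasDerivAt (fun s => X s j) (Phi (X t) (q (X t)) j) t) :
    (∀ t₁ t₂, ∑ j, X t₁ j = ∑ j, X t₂ j) ∧
    ((∑ j, X 0 j = d) → ∀ t, ∑ j, X t j = d) := by
  have hconst := sum_apply_eq_of_hasDerivAt_of_sum_eq_zero hX
    fun t => sum_Phi_eq_zero (X t) (q (X t))
  exact ⟨hconst, fun h0 t => (hconst t 0).trans h0⟩
end
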